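/- arXiv:2305.17428 — 6 statements merged into one kernel-verified Lean document; each statement's English description precedes it below -/
import Mathlib

section
/- Let k ≥ 1, let φ ∈ ℝ^k satisfy φ_j > 0 for all j, let Σ be a diagonal k×k matrix with diagonal entries Σ_jj > 0, and let p ≥ 1. Then the function g(w) = (Σ_j w_j φ_j) / sqrt(Σ_j Σ_jj w_j²), defined on the feasible set D = {w ∈ ℝ^k : w_j ≥ 0 for all j, ‖w‖_p = 1}, attains its maximum over D uniquely at the point w* = Σ⁻¹φ / ‖Σ⁻¹φ‖_p, i.e. w*_j = (φ_j/Σ_jj) / ‖Σ⁻¹φ‖_p. (This is the user-optimal weight vector of Theorem 4.1, since user utility is a strictly increasing function of g(w).) -/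
/-!
With `u = Σ⁻¹φ` one has `wᵀφ = wᵀΣu`, so `g(w) = ⟨w, u⟩_Σ / ‖w‖_Σ` for the inner product
`⟨w, u⟩_Σ = wᵀΣu`. Cauchy–Schwarz for this inner product gives `g(w) ≤ ‖u‖_Σ`, with equality
exactly when `w` is a nonnegative multiple of `u`; the constraint `‖w‖ₚ = 1` then forces the
multiple to be `1 / ‖u‖ₚ`.
-/

open Finset

variable {ι : Type*} [Fintype ι]

noncomputable def pNorm (p : ℝ) (w : ι → ℝ) : ℝ := (∑ j, |w j| ^ p) ^ (1 / p)

section PNorm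

variable {p : ℝ}

theorem pNorm_smul_of_nonneg (hp : p ≠ 0) {c : ℝ} (hc : 0 ≤ c) (w : ι → ℝ) :
    pNorm p (c • w) = c * pNorm p w := by
  have h (j : ι) : |(c • w) j| ^ p = c ^ p * |w j| ^ p := by
    rw [Pi.smul_apply, smul_eq_mul, abs_mul, abs_of_nonneg hc, Real.mul_rpow hc (abs_nonneg _)]
  simp only [pNorm, h, ← mul_sum]
  rw [Real.mul_rpow (by positivity) (by positivity), ← Real.rpow_mul hc, mul_one_div_cancel hp,
    Real.rpow_one]

theorem pNorm_pos {w : ι → ℝ} (hw : w ≠ 0) : 0 < pNorm p w := by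
  obtain ⟨j, hj⟩ := Function.ne_iff.mp hw
  exact Real.rpow_pos_of_pos (sum_pos' (fun i _ => by positivity)
    ⟨j, mem_univ j, Real.rpow_pos_of_pos (abs_pos.2 hj) p⟩) _

theorem pNorm_inv_pNorm_smul (hp : p ≠ 0) {u : ι → ℝ} (hu : u ≠ 0) :
    pNorm p ((pNorm p u)⁻¹ • u) = 1 := by
  rw [pNorm_smul_of_nonneg hp (inv_nonneg.2 (pNorm_pos hu).le), inv_mul_cancel₀ (pNorm_pos hu).ne']

theorem eq_inv_pNorm_smul_of_eq_smul (hp : p ≠ 0) {c : ℝ} (hc : 0 ≤ c) {w u : ι → ℝ}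
    (hw : pNorm p w = 1) (h : w = c • u) : w = (pNorm p u)⁻¹ • u := by
  rw [h, pNorm_smul_of_nonneg hp hc] at hw
  rw [h, eq_inv_of_mul_eq_one_left hw]

end PNorm

section WeightedCauchySchwarz

variable (S w u : ι → ℝ)

theorem sum_mul_sub_mul_sq (c : ℝ) :
    ∑ j, S j * (w j - c * u j) ^ 2 =
      ∑ j, S j * w j ^ 2 - 2 * c * ∑ j, S j * w j * u j + c ^ 2 * ∑ j, S j * u j ^ 2 := by
  simp only [mul_sum, ← sum_sub_distrib, ← sum_add_distrib]
  exact sum_congr rfl fun j _ => by ring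

theorem mul_sum_mul_sub_proj_sq {T : ℝ} (hT : ∑ j, S j * u j ^ 2 = T) (hT0 : T ≠ 0) :
    T * ∑ j, S j * (w j - (∑ i, S i * w i * u i) / T * u j) ^ 2 =
      (∑ j, S j * w j ^ 2) * T - (∑ j, S j * w j * u j) ^ 2 := by
  rw [sum_mul_sub_mul_sq, hT]
  field_simp
  ring

variable {S}

theorem sq_sum_mul_mul_le (hS : ∀ j, 0 ≤ S j) (hT : 0 < ∑ j, S j * u j ^ 2) :
    (∑ j, S j * w j * u j) ^ 2 ≤ (∑ j, S j * w j ^ 2) * ∑ j, S j * u j ^ 2 := by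
  have := mul_sum_mul_sub_proj_sq S w u rfl hT.ne'
  have : 0 ≤ ∑ j, S j * (w j - (∑ i, S i * w i * u i) / (∑ i, S i * u i ^ 2) * u j) ^ 2 :=
    sum_nonneg fun j _ => mul_nonneg (hS j) (sq_nonneg _)
  nlinarith

theorem eq_smul_of_sq_sum_mul_mul_eq (hS : ∀ j, 0 < S j) (hT : 0 < ∑ j, S j * u j ^ 2)
    (h : (∑ j, S j * w j * u j) ^ 2 = (∑ j, S j * w j ^ 2) * ∑ j, S j * u j ^ 2) :
    w = ((∑ j, S j * w j * u j) / ∑ j, S j * u j ^ 2) • u := by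
  have hdefect := mul_sum_mul_sub_proj_sq S w u rfl hT.ne'
  rw [h, sub_self, mul_eq_zero, or_iff_right hT.ne',
    sum_eq_zero_iff_of_nonneg fun j _ => mul_nonneg (hS j).le (sq_nonneg _)] at hdefect
  funext j
  have := hdefect j (mem_univ j)
  rw [mul_eq_zero, or_iff_right (hS j).ne', sq_eq_zero_iff, sub_eq_zero] at this
  exact this

theorem sum_mul_mul_div_sqrt_le (hS : ∀ j, 0 ≤ S j) (hT : 0 < ∑ j, S j * u j ^ 2) :
    (∑ j, S j * w j * u j) / √(∑ j, S j * w j ^ 2) ≤ √(∑ j, S j * u j ^ 2) := by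
  refine div_le_of_le_mul₀ (Real.sqrt_nonneg _) (Real.sqrt_nonneg _) ?_
  calc (∑ j, S j * w j * u j)
      ≤ |∑ j, S j * w j * u j| := le_abs_self _
    _ ≤ √((∑ j, S j * w j ^ 2) * ∑ j, S j * u j ^ 2) :=
        Real.abs_le_sqrt (sq_sum_mul_mul_le w u hS hT)
    _ = √(∑ j, S j * u j ^ 2) * √(∑ j, S j * w j ^ 2) := by
        rw [Real.sqrt_mul' _ hT.le, mul_comm]

theorem eq_smul_of_sum_mul_mul_div_sqrt_eq (hS : ∀ j, 0 < S j) (hT : 0 < ∑ j, S j * u j ^ 2)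
    (h : (∑ j, S j * w j * u j) / √(∑ j, S j * w j ^ 2) = √(∑ j, S j * u j ^ 2)) :
    w = ((∑ j, S j * w j * u j) / ∑ j, S j * u j ^ 2) • u := by
  refine eq_smul_of_sq_sum_mul_mul_eq w u hS hT ?_
  -- `a / 0 = 0` while the right-hand side of `h` is positive
  have hQ : √(∑ j, S j * w j ^ 2) ≠ 0 := by
    intro hQ
    rw [hQ, div_zero] at h
    exact (Real.sqrt_pos.2 hT).ne h
  rw [div_eq_iff hQ] at h
  rw [h, mul_pow, Real.sq_sqrt hT.le, Real.sq_sqrt (Real.sqrt_ne_zero'.1 hQ).le, mul_comm]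

theorem sum_mul_smul_mul_div_sqrt_eq {c : ℝ} (hc : 0 < c) :
    (∑ j, S j * (c • u) j * u j) / √(∑ j, S j * (c • u) j ^ 2) = √(∑ j, S j * u j ^ 2) := by
  have hA : ∑ j, S j * (c • u) j * u j = c * ∑ j, S j * u j ^ 2 := by
    simp only [mul_sum, Pi.smul_apply, smul_eq_mul]; exact sum_congr rfl fun j _ => by ring
  have hQ : ∑ j, S j * (c • u) j ^ 2 = c ^ 2 * ∑ j, S j * u j ^ 2 := by
    simp only [mul_sum, Pi.smul_apply, smul_eq_mul]; exact sum_congr rfl fun j _ => by ring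
  rw [hA, hQ, Real.sqrt_mul (sq_nonneg c), Real.sqrt_sq hc.le, mul_div_mul_left _ _ hc.ne',
    Real.div_sqrt]

end WeightedCauchySchwarz

/-- The user-optimal weight vector: `g(w) = (∑ wⱼφⱼ)/√(∑ Σⱼⱼwⱼ²)`
attains its maximum over `D = {w : w ≥ 0, ‖w‖ₚ = 1}` uniquely at
`w* = Σ⁻¹φ / ‖Σ⁻¹φ‖ₚ`. -/
theorem stmt_0 (k : ℕ) (hk : 1 ≤ k) (p : ℝ) (hp : 1 ≤ p)
    (φ S : Fin k → ℝ) (hφ : ∀ j, 0 < φ j) (hS : ∀ j, 0 < S j) :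
    let pnorm : (Fin k → ℝ) → ℝ := fun w => (∑ j, |w j| ^ p) ^ (1 / p)
    let g : (Fin k → ℝ) → ℝ :=
      fun w => (∑ j, w j * φ j) / Real.sqrt (∑ j, S j * w j ^ 2)
    let D : Set (Fin k → ℝ) := {w | (∀ j, 0 ≤ w j) ∧ pnorm w = 1}
    let wstar : Fin k → ℝ := fun j => (φ j / S j) / pnorm (fun i => φ i / S i)
    wstar ∈ D ∧ (∀ w ∈ D, g w ≤ g wstar) ∧ (∀ w ∈ D, g w = g wstar → w = wstar) := by
  intro pnorm g D wstar
  have hp0 : p ≠ 0 := (zero_lt_one.trans_le hp).ne'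
  set u : Fin k → ℝ := fun j => φ j / S j
  have hu_pos (j : Fin k) : 0 < u j := div_pos (hφ j) (hS j)
  have hu : u ≠ 0 := Function.ne_iff.2 ⟨⟨0, hk⟩, (hu_pos _).ne'⟩
  have hT : 0 < ∑ j, S j * u j ^ 2 :=
    sum_pos (fun j _ => mul_pos (hS j) (pow_pos (hu_pos j) 2)) ⟨⟨0, hk⟩, mem_univ _⟩
  have hg (w : Fin k → ℝ) : g w = (∑ j, S j * w j * u j) / √(∑ j, S j * w j ^ 2) := by
    refine congrArg (· / _) (sum_congr rfl fun j _ => ?_)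
    show w j * φ j = S j * w j * (φ j / S j)
    field_simp [(hS j).ne']
  have hwstar : wstar = (pNorm p u)⁻¹ • u := by
    funext j
    exact div_eq_inv_mul _ _
  have hgwstar : g wstar = √(∑ j, S j * u j ^ 2) := by
    rw [hg, hwstar, sum_mul_smul_mul_div_sqrt_eq u (inv_pos.2 (pNorm_pos hu))]
  have hwstar_mem : wstar ∈ D := by
    rw [hwstar]
    exact ⟨fun j => mul_nonneg (inv_nonneg.2 (pNorm_pos hu).le) (hu_pos j).le,
      pNorm_inv_pNorm_smul hp0 hu⟩
  refine ⟨hwstar_mem, fun w _ => ?_, fun w hw h => ?_⟩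
  · rw [hgwstar, hg]
    exact sum_mul_mul_div_sqrt_le w u (fun j => (hS j).le) hT
  · rw [hgwstar, hg] at h
    have hw_eq := eq_smul_of_sum_mul_mul_div_sqrt_eq w u hS hT h
    have hc : 0 ≤ (∑ j, S j * w j * u j) / ∑ j, S j * u j ^ 2 :=
      div_nonneg (sum_nonneg fun j _ => mul_nonneg (mul_nonneg (hS j).le (hw.1 j)) (hu_pos j).le)
        hT.le
    rw [hwstar]
    exact eq_inv_pNorm_smul_of_eq_smul hp0 hc hw.2 hw_eq
end

section
/- Let k ≥ 1, p ≥ 1, let Σ be diagonal with Σ_jj > 0, and let A be diagonal with A_jj > 0. For a value-faithfulness vector φ with φ_j > 0 for all j, define W_eq(w; φ, Σ, A) = ½ − ½·g_{σ(w)}(wᵀφ)²·Σ_j w_j²/A_jj, where σ(w)² = 2·Σ_j Σ_jj w_j², and define the optimal producer welfare W*(φ, Σ, A) = sup over D = {w ∈ ℝ^k : w_j ≥ 0 for all j, ‖w‖_p = 1} of W_eq(w; φ, Σ, A). If φ'_j ≥ φ_j > 0 for all j, then W*(φ', Σ, A) ≥ W*(φ, Σ, A). That is, optimal producer welfare is monotonically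 nondecreasing in each behavior's value-faithfulness. -/
/-
For every feasible weight vector `w ≥ 0`, the score `∑ⱼ wⱼ φⱼ` grows with `φ`, and the Gaussian
density is decreasing on `[0, ∞)`, so the welfare penalty `½ g_σ(wᵀφ)² ∑ⱼ wⱼ²/Aⱼⱼ` shrinks.
Hence `W_eq(w; φ) ≤ W_eq(w; φ')` pointwise on `D`; since all welfares are bounded by `½`,
taking suprema preserves the inequality.
-/

/-- The density of the centered Gaussian `N(0, σ²)`. -/
noncomputable def gauss (σ x : ℝ) : ℝ :=
  (Real.sqrt (2 * Real.pi * σ ^ 2))⁻¹ * Real.exp (-x ^ 2 / (2 * σ ^ 2))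

lemma gauss_nonneg (σ x : ℝ) : 0 ≤ gauss σ x := by
  unfold gauss
  positivity

lemma gauss_antitoneOn (σ : ℝ) : AntitoneOn (gauss σ) (Set.Ici 0) := by
  intro x hx y _ hxy
  unfold gauss
  gcongr

lemma half_sub_half_gauss_sq_mul_le_half (σ x c : ℝ) (hc : 0 ≤ c) :
    1 / 2 - 1 / 2 * (gauss σ x ^ 2 * c) ≤ 1 / 2 := by
  have : 0 ≤ gauss σ x ^ 2 * c := by positivity
  linarith

lemma half_sub_half_gauss_sq_mul_mono (σ c : ℝ) {x y : ℝ} (hc : 0 ≤ c) (hx : 0 ≤ x)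
    (hxy : x ≤ y) :
    1 / 2 - 1 / 2 * (gauss σ x ^ 2 * c) ≤ 1 / 2 - 1 / 2 * (gauss σ y ^ 2 * c) := by
  have hg : gauss σ y ≤ gauss σ x := gauss_antitoneOn σ hx (hx.trans hxy) hxy
  have := gauss_nonneg σ y
  gcongr

lemma csSup_image_mono {α β : Type*} [ConditionallyCompleteLattice β] {s : Set α}
    {f g : α → β} (hg : BddAbove (g '' s)) (hfg : ∀ x ∈ s, f x ≤ g x) :
    sSup (f '' s) ≤ sSup (g '' s) := by
  rw [sSup_image', sSup_image']
  rw [Set.image_eq_range] at hg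
  exact ciSup_mono hg fun x => hfg x x.2

theorem stmt_13_general (k : ℕ) (p : ℝ)
    (φ φ' S A : Fin k → ℝ) (hφ : ∀ j, 0 < φ j) (hφφ' : ∀ j, φ j ≤ φ' j)
    (hA : ∀ j, 0 < A j) :
    let pnorm : (Fin k → ℝ) → ℝ := fun w => (∑ j, |w j| ^ p) ^ (1 / p)
    let D : Set (Fin k → ℝ) := {w | (∀ j, 0 ≤ w j) ∧ pnorm w = 1}
    let Weq : (Fin k → ℝ) → (Fin k → ℝ) → ℝ := fun w f =>
      1 / 2 - (1 / 2) * (gauss (Real.sqrt (2 * ∑ j, S j * w j ^ 2)) (∑ j, w j * f j) ^ 2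
        * ∑ j, w j ^ 2 / A j)
    let Wstar : (Fin k → ℝ) → ℝ := fun f => sSup ((fun w => Weq w f) '' D)
    Wstar φ ≤ Wstar φ' := by
  intro pnorm D Weq Wstar
  have hcost (w : Fin k → ℝ) : 0 ≤ ∑ j, w j ^ 2 / A j :=
    Finset.sum_nonneg fun j _ => div_nonneg (sq_nonneg _) (hA j).le
  refine csSup_image_mono ⟨1 / 2, ?_⟩ fun w ⟨hw, _⟩ => ?_
  · rintro _ ⟨w, -, rfl⟩
    exact half_sub_half_gauss_sq_mul_le_half _ _ _ (hcost w)
  · refine half_sub_half_gauss_sq_mul_mono _ _ (hcost w) ?_ ?_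
    · exact Finset.sum_nonneg fun j _ => mul_nonneg (hw j) (hφ j).le
    · exact Finset.sum_le_sum fun j _ => mul_le_mul_of_nonneg_left (hφφ' j) (hw j)

/-- Optimal producer welfare is monotonically nondecreasing in each
behavior's value-faithfulness `φⱼ`. -/
theorem stmt_13 (k : ℕ) (hk : 1 ≤ k) (p : ℝ) (hp : 1 ≤ p)
    (φ φ' S A : Fin k → ℝ) (hφ : ∀ j, 0 < φ j) (hφφ' : ∀ j, φ j ≤ φ' j)
    (hS : ∀ j, 0 < S j) (hA : ∀ j, 0 < A j) :
    let pnorm : (Fin k → ℝ) → ℝ := fun w => (∑ j, |w j| ^ p) ^ (1 / p)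
    let D : Set (Fin k → ℝ) := {w | (∀ j, 0 ≤ w j) ∧ pnorm w = 1}
    let Weq : (Fin k → ℝ) → (Fin k → ℝ) → ℝ := fun w f =>
      1 / 2 - (1 / 2) * (gauss (Real.sqrt (2 * ∑ j, S j * w j ^ 2)) (∑ j, w j * f j) ^ 2
        * ∑ j, w j ^ 2 / A j)
    let Wstar : (Fin k → ℝ) → ℝ := fun f => sSup ((fun w => Weq w f) '' D)
    Wstar φ ≤ Wstar φ' :=
  stmt_13_general k p φ φ' S A hφ hφφ' hA
end

section
/- Let k ≥ 1, p ≥ 1, let φ ∈ ℝ^k satisfy φ_j > 0 for all j, let Σ be diagonal with Σ_jj > 0, and let A be diagonal with A_jj > 0. Define W_eq(w; φ, Σ, A) = ½ − ½·g_{σ(w)}(wᵀφ)²·Σ_j w_j²/A_jj, where σ(w)² = 2·Σ_j Σ_jj w_j², and W*(φ, Σ, A) = sup over D = {w ∈ ℝ^k : w_j ≥ 0 for all j, ‖w‖_p = 1} of W_eq(w; φ, Σ, A). Fix a coordinate j and let A[j := t] denote A with its j-th diagonal entry replaced by t > 0. Then W*(φ, Σ, A[j := t]) tends to ½ (the maximum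 possible producer welfare) as t → ∞. -/
open Filter Topology

theorem tendsto_csSup_of_le_of_mem {α β : Type*} [ConditionallyCompleteLinearOrder α]
    [TopologicalSpace α] [OrderTopology α] {l : Filter β} {s : β → Set α} {f : β → α} {a : α}
    (hmem : ∀ᶠ t in l, f t ∈ s t) (hle : ∀ᶠ t in l, ∀ x ∈ s t, x ≤ a)
    (hf : Tendsto f l (𝓝 a)) : Tendsto (fun t => sSup (s t)) l (𝓝 a) := by
  refine tendsto_of_tendsto_of_tendsto_of_le_of_le' hf tendsto_const_nhds ?_ ?_
  · filter_upwards [hmem, hle] with t hft hst using le_csSup ⟨a, hst⟩ hft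
  · filter_upwards [hmem, hle] with t hft hst using csSup_le ⟨f t, hft⟩ hst

theorem stmt_14_general (k : ℕ) (p : ℝ) (hp : 1 ≤ p)
    (φ S A : Fin k → ℝ) (hA : ∀ j, 0 < A j)
    (j : Fin k) :
    let pnorm : (Fin k → ℝ) → ℝ := fun w => (∑ i, |w i| ^ p) ^ (1 / p)
    let D : Set (Fin k → ℝ) := {w | (∀ i, 0 ≤ w i) ∧ pnorm w = 1}
    let Weq : (Fin k → ℝ) → (Fin k → ℝ) → ℝ := fun w C =>
      1 / 2 - (1 / 2) * (gauss (Real.sqrt (2 * ∑ i, S i * w i ^ 2)) (∑ i, w i * φ i) ^ 2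
        * ∑ i, w i ^ 2 / C i)
    let Wstar : (Fin k → ℝ) → ℝ := fun C => sSup ((fun w => Weq w C) '' D)
    Filter.Tendsto (fun t : ℝ => Wstar (Function.update A j t))
      Filter.atTop (nhds (1 / 2)) := by
  intro pnorm D Weq Wstar
  have hp0 : p ≠ 0 := by positivity
  set e : Fin k → ℝ := Pi.single j 1
  have he : e ∈ D := by
    refine ⟨fun i => ?_, ?_⟩
    · rcases eq_or_ne i j with rfl | hi <;> simp [e, *]
    · simp [pnorm, e, Pi.single_apply, apply_ite, Real.zero_rpow hp0]
  have hWe : ∀ t, Weq e (Function.update A j t) =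
      1 / 2 - 1 / 2 * (gauss (Real.sqrt (2 * S j)) (φ j) ^ 2 * t⁻¹) := by
    intro t
    simp [Weq, e, Pi.single_apply, ite_div]
  refine tendsto_csSup_of_le_of_mem (f := fun t => Weq e (Function.update A j t))
    (Eventually.of_forall fun t => Set.mem_image_of_mem _ he) ?_ ?_
  · filter_upwards [eventually_gt_atTop 0] with t ht
    rintro _ ⟨w, -, rfl⟩
    have hC : ∀ i, 0 ≤ Function.update A j t i := fun i => by
      rcases eq_or_ne i j with rfl | hi
      · simpa using ht.le
      · simpa [hi] using (hA i).le
    have hcost : 0 ≤ ∑ i, w i ^ 2 / Function.update A j t i :=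
      Finset.sum_nonneg fun i _ => div_nonneg (sq_nonneg _) (hC i)
    exact sub_le_self _ (by positivity)
  · simp only [hWe]
    simpa using ((tendsto_inv_atTop_zero.const_mul _).const_mul (1 / 2 : ℝ)).const_sub (1 / 2 : ℝ)

/-- As the strategy-robustness `Aⱼⱼ` of behavior `j` tends to infinity, the
optimal producer welfare tends to `½`, the maximum possible value. -/
theorem stmt_14 (k : ℕ) (hk : 1 ≤ k) (p : ℝ) (hp : 1 ≤ p)
    (φ S A : Fin k → ℝ) (hφ : ∀ j, 0 < φ j) (hS : ∀ j, 0 < S j) (hA : ∀ j, 0 < A j)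
    (j : Fin k) :
    let pnorm : (Fin k → ℝ) → ℝ := fun w => (∑ i, |w i| ^ p) ^ (1 / p)
    let D : Set (Fin k → ℝ) := {w | (∀ i, 0 ≤ w i) ∧ pnorm w = 1}
    let Weq : (Fin k → ℝ) → (Fin k → ℝ) → ℝ := fun w C =>
      1 / 2 - (1 / 2) * (gauss (Real.sqrt (2 * ∑ i, S i * w i ^ 2)) (∑ i, w i * φ i) ^ 2
        * ∑ i, w i ^ 2 / C i)
    let Wstar : (Fin k → ℝ) → ℝ := fun C => sSup ((fun w => Weq w C) '' D)
    Filter.Tendsto (fun t : ℝ => Wstar (Function.update A j t))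
      Filter.atTop (nhds (1 / 2)) :=
  stmt_14_general k p hp φ S A hA j
end

section
/- Let k ≥ 1, p ≥ 1, let φ ∈ ℝ^k satisfy φ_j > 0 for all j, let Σ be diagonal with Σ_jj > 0, and let A be diagonal with A_jj > 0. Define W_eq(w; φ, Σ, A) = ½ − ½·g_{σ(w)}(wᵀφ)²·Σ_j w_j²/A_jj, where σ(w)² = 2·Σ_j Σ_jj w_j², and W*(φ, Σ, A) = sup over D = {w ∈ ℝ^k : w_j ≥ 0 for all j, ‖w‖_p = 1} of W_eq(w; φ, Σ, A). Fix a coordinate j and let φ[j := t] denote φ with its j-th coordinate replaced by t > 0. Then W*(φ[j := t], Σ, A) tends to ½ (the maximum possible producer welfare) as t → ∞. -/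
lemma gauss_tendsto (σ : ℝ) (hσ : 0 < σ) :
    Filter.Tendsto (fun t : ℝ => gauss σ t) Filter.atTop (nhds 0) := by
  have h1 : Filter.Tendsto (fun t : ℝ => -t ^ 2 / (2 * σ ^ 2)) Filter.atTop Filter.atBot := by
    have h2 : Filter.Tendsto (fun t : ℝ => t ^ 2 / (2 * σ ^ 2)) Filter.atTop Filter.atTop :=
      (Filter.tendsto_pow_atTop (by norm_num : (2:ℕ) ≠ 0)).atTop_div_const (by positivity)
    simpa [neg_div] using Filter.tendsto_neg_atBot_iff.mpr h2
  have h3 : Filter.Tendsto (fun t : ℝ => Real.exp (-t ^ 2 / (2 * σ ^ 2)))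
      Filter.atTop (nhds 0) := Real.tendsto_exp_atBot.comp h1
  have := h3.const_mul ((Real.sqrt (2 * Real.pi * σ ^ 2))⁻¹)
  simpa [gauss, mul_zero] using this

/-- As the value-faithfulness `φⱼ` of behavior `j` tends to infinity, the
optimal producer welfare tends to `½`, the maximum possible value. -/
theorem stmt_15 (k : ℕ) (hk : 1 ≤ k) (p : ℝ) (hp : 1 ≤ p)
    (φ S A : Fin k → ℝ) (hφ : ∀ j, 0 < φ j) (hS : ∀ j, 0 < S j) (hA : ∀ j, 0 < A j)
    (j : Fin k) :
    let pnorm : (Fin k → ℝ) → ℝ := fun w => (∑ i, |w i| ^ p) ^ (1 / p)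
    let D : Set (Fin k → ℝ) := {w | (∀ i, 0 ≤ w i) ∧ pnorm w = 1}
    let Weq : (Fin k → ℝ) → (Fin k → ℝ) → ℝ := fun w f =>
      1 / 2 - (1 / 2) * (gauss (Real.sqrt (2 * ∑ i, S i * w i ^ 2)) (∑ i, w i * f i) ^ 2
        * ∑ i, w i ^ 2 / A i)
    let Wstar : (Fin k → ℝ) → ℝ := fun f => sSup ((fun w => Weq w f) '' D)
    Filter.Tendsto (fun t : ℝ => Wstar (Function.update φ j t))
      Filter.atTop (nhds (1 / 2)) := by
  intro pnorm D Weq Wstar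
  have hp0 : p ≠ 0 := by linarith
  -- the unit vector e_j
  set w0 : Fin k → ℝ := fun i => if i = j then 1 else 0 with hw0
  have hw0D : w0 ∈ D := by
    constructor
    · intro i; simp only [hw0]; split <;> norm_num
    · simp only [pnorm, hw0]
      have : ∀ i : Fin k, |if i = j then (1:ℝ) else 0| ^ p = if i = j then 1 else 0 := by
        intro i; split <;> simp [Real.zero_rpow hp0]
      rw [Finset.sum_congr rfl (fun i _ => this i)]
      simp [Real.one_rpow]
  -- upper bound
  have hub : ∀ f : Fin k → ℝ, ∀ w ∈ D, Weq w f ≤ 1 / 2 := by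
    intro f w hw
    simp only [Weq]
    have h1 : (0:ℝ) ≤ gauss (Real.sqrt (2 * ∑ i, S i * w i ^ 2)) (∑ i, w i * f i) ^ 2 :=
      sq_nonneg _
    have h2 : (0:ℝ) ≤ ∑ i, w i ^ 2 / A i :=
      Finset.sum_nonneg fun i _ => div_nonneg (sq_nonneg _) (hA i).le
    nlinarith
  have hbdd : ∀ f : Fin k → ℝ, BddAbove ((fun w => Weq w f) '' D) := by
    intro f
    exact ⟨1 / 2, by rintro x ⟨w, hw, rfl⟩; exact hub f w hw⟩
  -- value at e_j
  have hval : ∀ t : ℝ, Weq w0 (Function.update φ j t)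
      = 1 / 2 - 1 / 2 * (gauss (Real.sqrt (2 * S j)) t ^ 2 * (A j)⁻¹) := by
    intro t
    have e1 : ∑ i, S i * w0 i ^ 2 = S j := by
      rw [Finset.sum_congr rfl (fun i _ => by
        simp only [hw0]; split <;> simp [*] : ∀ i ∈ Finset.univ,
          S i * w0 i ^ 2 = if i = j then S j else 0)]
      simp
    have e2 : ∑ i, w0 i * Function.update φ j t i = t := by
      rw [Finset.sum_congr rfl (fun i _ => by
        simp only [hw0]; split
        · subst ‹i = j›; simp
        · simp : ∀ i ∈ Finset.univ,
          w0 i * Function.update φ j t i = if i = j then t else 0)]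
      simp
    have e3 : ∑ i, w0 i ^ 2 / A i = (A j)⁻¹ := by
      rw [Finset.sum_congr rfl (fun i _ => by
        simp only [hw0]; split <;> simp [*, one_div] : ∀ i ∈ Finset.univ,
          w0 i ^ 2 / A i = if i = j then (A j)⁻¹ else 0)]
      simp
    simp only [Weq, e1, e2, e3]
  -- limit of the lower bound
  have hlow : Filter.Tendsto (fun t : ℝ => Weq w0 (Function.update φ j t))
      Filter.atTop (nhds (1 / 2)) := by
    have hσ : 0 < Real.sqrt (2 * S j) := Real.sqrt_pos.mpr (by have := hS j; linarith)
    have hg := gauss_tendsto _ hσ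
    have : Filter.Tendsto (fun t : ℝ =>
        1 / 2 - 1 / 2 * (gauss (Real.sqrt (2 * S j)) t ^ 2 * (A j)⁻¹))
        Filter.atTop (nhds (1 / 2 - 1 / 2 * (0 ^ 2 * (A j)⁻¹))) :=
      Filter.Tendsto.const_sub _ ((((hg.pow 2).mul_const _).const_mul _))
    simp only [hval]
    simpa using this
  -- squeeze
  refine tendsto_of_tendsto_of_tendsto_of_le_of_le hlow tendsto_const_nhds ?_ ?_
  · intro t
    exact le_csSup (hbdd _) ⟨w0, hw0D, rfl⟩
  · intro t
    exact csSup_le ⟨_, ⟨w0, hw0D, rfl⟩⟩ (by rintro x ⟨w, hw, rfl⟩; exact hub _ w hw)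
end

section
/- Let k ≥ 1, p ≥ 1, let φ ∈ ℝ^k satisfy φ_j > 0 for all j, let Σ be diagonal with Σ_jj > 0, and let A be diagonal with A_jj > 0. Define W_eq(w; φ, Σ, A) = ½ − ½·g_{σ(w)}(wᵀφ)²·Σ_j w_j²/A_jj, where σ(w)² = 2·Σ_j Σ_jj w_j², and W*(φ, Σ, A) = sup over D = {w ∈ ℝ^k : w_j ≥ 0 for all j, ‖w‖_p = 1} of W_eq(w; φ, Σ, A). Fix a coordinate j and let Σ[j := t] denote Σ with its j-th diagonal entry replaced by t > 0. Then W*(φ, Σ[j := t], A) tends to ½ (the maximum possible producer welfare) as t → ∞. -/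
open Filter Topology

theorem tendsto_gauss_atTop (x : ℝ) : Tendsto (fun σ => gauss σ x) atTop (𝓝 0) := by
  have hsq : Tendsto (fun σ : ℝ => σ ^ 2) atTop atTop := tendsto_pow_atTop two_ne_zero
  have hprefactor : Tendsto (fun σ : ℝ => (Real.sqrt (2 * Real.pi * σ ^ 2))⁻¹) atTop (𝓝 0) :=
    tendsto_inv_atTop_zero.comp <| Real.tendsto_sqrt_atTop.comp <|
      hsq.const_mul_atTop (by positivity)
  have hexponent : Tendsto (fun σ : ℝ => -x ^ 2 / (2 * σ ^ 2)) atTop (𝓝 0) :=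
    tendsto_const_nhds.div_atTop (hsq.const_mul_atTop two_pos)
  simpa [gauss] using hprefactor.mul ((Real.continuous_exp.tendsto 0).comp hexponent)

/-- For `p = 0` the sum is `card ι` rather than `1`, but then the outer exponent `1 / 0` is `0`. -/
theorem rpow_sum_abs_single_rpow {ι : Type*} [Fintype ι] [DecidableEq ι] (j : ι) (p : ℝ) :
    (∑ i, |(Pi.single j 1 : ι → ℝ) i| ^ p) ^ (1 / p) = 1 := by
  rcases eq_or_ne p 0 with rfl | hp
  · simp
  · simp [Pi.single_apply, apply_ite (fun x : ℝ => |x| ^ p), Real.zero_rpow hp]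

theorem stmt_16_general (k : ℕ) (p : ℝ)
    (φ S A : Fin k → ℝ) (hA : ∀ j, 0 < A j)
    (j : Fin k) :
    let pnorm : (Fin k → ℝ) → ℝ := fun w => (∑ i, |w i| ^ p) ^ (1 / p)
    let D : Set (Fin k → ℝ) := {w | (∀ i, 0 ≤ w i) ∧ pnorm w = 1}
    let Weq : (Fin k → ℝ) → (Fin k → ℝ) → ℝ := fun w V =>
      1 / 2 - (1 / 2) * (gauss (Real.sqrt (2 * ∑ i, V i * w i ^ 2)) (∑ i, w i * φ i) ^ 2
        * ∑ i, w i ^ 2 / A i)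
    let Wstar : (Fin k → ℝ) → ℝ := fun V => sSup ((fun w => Weq w V) '' D)
    Filter.Tendsto (fun t : ℝ => Wstar (Function.update S j t))
      Filter.atTop (nhds (1 / 2)) := by
  intro pnorm D Weq Wstar
  set e : Fin k → ℝ := Pi.single j 1
  have he : e ∈ D :=
    ⟨(Pi.single_nonneg.mpr zero_le_one : (0 : Fin k → ℝ) ≤ e), rpow_sum_abs_single_rpow j p⟩
  have hWeq_le : ∀ w V, Weq w V ≤ 1 / 2 := fun w V => by
    have := Finset.sum_nonneg fun i (_ : i ∈ Finset.univ) => div_nonneg (sq_nonneg (w i)) (hA i).le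
    simp only [Weq]
    nlinarith [mul_nonneg (sq_nonneg (gauss (Real.sqrt (2 * ∑ i, V i * w i ^ 2))
      (∑ i, w i * φ i))) this]
  have hWeq_e : ∀ t, Weq e (Function.update S j t) =
      1 / 2 - 1 / 2 * (gauss (Real.sqrt (2 * t)) (φ j) ^ 2 * (A j)⁻¹) := fun t => by
    simp [Weq, e, Pi.single_apply, ite_div]
  have hlower : Tendsto (fun t => Weq e (Function.update S j t)) atTop (𝓝 (1 / 2)) := by
    have hσ : Tendsto (fun t : ℝ => Real.sqrt (2 * t)) atTop atTop :=
      Real.tendsto_sqrt_atTop.comp (tendsto_id.const_mul_atTop two_pos)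
    simpa [hWeq_e] using (((((tendsto_gauss_atTop (φ j)).comp hσ).pow 2).mul_const (A j)⁻¹
      ).const_mul (1 / 2 : ℝ)).const_sub (1 / 2 : ℝ)
  have hbdd : ∀ V, BddAbove ((fun w => Weq w V) '' D) := fun V =>
    ⟨1 / 2, by rintro _ ⟨w, -, rfl⟩; exact hWeq_le w V⟩
  exact tendsto_of_tendsto_of_tendsto_of_le_of_le hlower tendsto_const_nhds
    (fun t => le_csSup (hbdd _) (Set.mem_image_of_mem _ he))
    (fun t => csSup_le (Set.image_nonempty.mpr ⟨e, he⟩) (by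
      rintro _ ⟨w, -, rfl⟩; exact hWeq_le w _))

/-- As the variance `Sⱼⱼ` of behavior `j` tends to infinity, the optimal
producer welfare tends to `½`, the maximum possible value. -/
theorem stmt_16 (k : ℕ) (hk : 1 ≤ k) (p : ℝ) (hp : 1 ≤ p)
    (φ S A : Fin k → ℝ) (hφ : ∀ j, 0 < φ j) (hS : ∀ j, 0 < S j) (hA : ∀ j, 0 < A j)
    (j : Fin k) :
    let pnorm : (Fin k → ℝ) → ℝ := fun w => (∑ i, |w i| ^ p) ^ (1 / p)
    let D : Set (Fin k → ℝ) := {w | (∀ i, 0 ≤ w i) ∧ pnorm w = 1}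
    let Weq : (Fin k → ℝ) → (Fin k → ℝ) → ℝ := fun w V =>
      1 / 2 - (1 / 2) * (gauss (Real.sqrt (2 * ∑ i, V i * w i ^ 2)) (∑ i, w i * φ i) ^ 2
        * ∑ i, w i ^ 2 / A i)
    let Wstar : (Fin k → ℝ) → ℝ := fun V => sSup ((fun w => Weq w V) '' D)
    Filter.Tendsto (fun t : ℝ => Wstar (Function.update S j t))
      Filter.atTop (nhds (1 / 2)) :=
  stmt_16_general k p φ S A hA j
end

section
/- Let k ≥ 1, let φ ∈ ℝ^k satisfy φ_j > 0 for all j, let Σ be a diagonal k×k matrix with diagonal entries Σ_jj > 0, and let p ≥ 1. For w in the feasible set D = {w ∈ ℝ^k : w_j ≥ 0 for all j, ‖w‖_p = 1}, set σ(w)² = 2·Σ_j Σ_jj w_j² and define the user utility U(w) = F_{σ(w)}(Σ_j w_j φ_j), where F_σ(x) = ∫_{−∞}^x g_σ(t) dt. Then U attains its maximum over D uniquely at w* = Σ⁻¹φ / ‖Σ⁻¹φ‖_p. (Because the symmetric equilibrium efforts of the two producers cancel, this same w* remains the user-optimal weight vector under strategic adaptation, independent of the cost matrix A.) -/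
/-- The CDF of the centered Gaussian `N(0, σ²)`. -/
noncomputable def gaussCDF (σ x : ℝ) : ℝ := ∫ t in Set.Iic x, gauss σ t

/-!
Standardising the Gaussian, `U w = Φ(√(r w / 2))` with `Φ` the standard normal CDF and
`r w = (wᵀφ)² / wᵀΣw`. The weighted Cauchy–Schwarz inequality `(wᵀφ)² ≤ (wᵀΣw)(φᵀΣ⁻¹φ)` bounds
`r` by `φᵀΣ⁻¹φ`, with equality exactly on the line through `Σ⁻¹φ`; since `Φ ∘ √` is strictly
increasing, `U` is maximal exactly there, and the only point of `D` on that line is `w*`.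
-/

open Finset Real MeasureTheory ProbabilityTheory

lemma gauss_eq_gaussianPDFReal (σ : ℝ) : gauss σ = gaussianPDFReal 0 (σ ^ 2).toNNReal := by
  ext x
  simp [gauss, gaussianPDFReal, Real.coe_toNNReal _ (sq_nonneg σ)]

lemma gaussCDF_eq_gaussianReal {σ : ℝ} (hσ : σ ≠ 0) (x : ℝ) :
    gaussCDF σ x = (gaussianReal 0 (σ ^ 2).toNNReal (Set.Iic x)).toReal := by
  rw [gaussianReal_apply_eq_integral _ (by simpa [← NNReal.coe_inj] using hσ),
    ENNReal.toReal_ofReal (setIntegral_nonneg measurableSet_Iic fun _ _ ↦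
      gaussianPDFReal_nonneg _ _ _), gaussCDF, gauss_eq_gaussianPDFReal]

lemma gaussCDF_eq_gaussCDF_one {σ : ℝ} (hσ : 0 < σ) (x : ℝ) :
    gaussCDF σ x = gaussCDF 1 (x / σ) := by
  have hmap : (gaussianReal 0 1).map (σ * ·) = gaussianReal 0 (σ ^ 2).toNNReal := by
    rw [gaussianReal_map_const_mul]
    congr 1
    · simp
    · ext; simp [sq_nonneg]
  have hpre : (σ * ·) ⁻¹' Set.Iic x = Set.Iic (x / σ) := by
    ext t
    simp [le_div_iff₀ hσ, mul_comm]
  rw [gaussCDF_eq_gaussianReal hσ.ne', gaussCDF_eq_gaussianReal one_ne_zero, ← hmap,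
    Measure.map_apply (measurable_const_mul σ) measurableSet_Iic, hpre, one_pow,
    Real.toNNReal_one]

lemma gaussCDF_strictMono {σ : ℝ} (hσ : σ ≠ 0) : StrictMono (gaussCDF σ) := by
  intro a b hab
  have hσ' : (σ ^ 2).toNNReal ≠ 0 := by simpa [← NNReal.coe_inj] using hσ
  have hint := integrable_gaussianPDFReal 0 (σ ^ 2).toNNReal
  have hdiff : gaussCDF σ b - gaussCDF σ a = ∫ t in a..b, gauss σ t := by
    simp only [gaussCDF, gauss_eq_gaussianPDFReal]
    exact intervalIntegral.integral_Iic_sub_Iic hint.integrableOn hint.integrableOn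
  have hpos : 0 < ∫ t in a..b, gauss σ t := by
    rw [gauss_eq_gaussianPDFReal]
    exact intervalIntegral.intervalIntegral_pos_of_pos hint.intervalIntegrable
      (gaussianPDFReal_pos 0 _ · hσ') hab
  linarith

section WeightedCauchySchwarz

variable {ι : Type*} [Fintype ι] {a : ι → ℝ} (x y : ι → ℝ)

lemma sum_mul_sq_pos (ha : ∀ i, 0 < a i) (hx : x ≠ 0) : 0 < ∑ i, a i * x i ^ 2 := by
  obtain ⟨j, hj⟩ := Function.ne_iff.1 hx
  have hj : x j ≠ 0 := hj
  exact sum_pos' (fun i _ ↦ by have := ha i; positivity)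
    ⟨j, mem_univ j, by have := ha j; positivity⟩

lemma sum_mul_sub_sq_eq (ha : ∀ i, a i ≠ 0) (t : ℝ) :
    ∑ i, a i * (x i - t * (y i / a i)) ^ 2
      = ∑ i, a i * x i ^ 2 - 2 * t * ∑ i, x i * y i + t ^ 2 * ∑ i, y i ^ 2 / a i := by
  rw [mul_sum, mul_sum, ← sum_sub_distrib, ← sum_add_distrib]
  refine sum_congr rfl fun i _ ↦ ?_
  field_simp [ha i]
  ring

lemma sq_sum_mul_le (ha : ∀ i, 0 < a i) :
    (∑ i, x i * y i) ^ 2 ≤ (∑ i, a i * x i ^ 2) * ∑ i, y i ^ 2 / a i :=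
  sum_sq_le_sum_mul_sum_of_sq_le_mul _ (fun i _ ↦ by have := ha i; positivity)
    (fun i _ ↦ by have := ha i; positivity) fun i _ ↦ le_of_eq (by field_simp [(ha i).ne'])

lemma sq_sum_mul_eq_iff (ha : ∀ i, 0 < a i) (hy : y ≠ 0) :
    (∑ i, x i * y i) ^ 2 = (∑ i, a i * x i ^ 2) * ∑ i, y i ^ 2 / a i ↔
      ∃ t : ℝ, x = fun i ↦ t * (y i / a i) := by
  have hM : 0 < ∑ i, y i ^ 2 / a i := by
    simpa only [div_eq_inv_mul] using sum_mul_sq_pos y (fun i ↦ inv_pos.2 (ha i)) hy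
  constructor
  · intro h
    refine ⟨(∑ i, x i * y i) / ∑ i, y i ^ 2 / a i, funext fun i ↦ ?_⟩
    have hzero : ∑ i, a i * (x i - (∑ i, x i * y i) / (∑ i, y i ^ 2 / a i) * (y i / a i)) ^ 2
        = 0 := by
      rw [sum_mul_sub_sq_eq x y (fun i ↦ (ha i).ne')]
      field_simp
      linear_combination -h
    have hi := (sum_eq_zero_iff_of_nonneg (fun i _ ↦ by have := ha i; positivity)).1 hzero i
      (mem_univ i)
    simpa [(ha i).ne', sub_eq_zero] using hi
  · rintro ⟨t, rfl⟩
    have hxy : ∑ i, t * (y i / a i) * y i = t * ∑ i, y i ^ 2 / a i := by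
      rw [mul_sum]
      exact sum_congr rfl fun i _ ↦ by ring
    have hax : ∑ i, a i * (t * (y i / a i)) ^ 2 = t ^ 2 * ∑ i, y i ^ 2 / a i := by
      rw [mul_sum]
      exact sum_congr rfl fun i _ ↦ by field_simp [(ha i).ne']
    rw [hxy, hax]
    ring

lemma sq_sum_mul_div_le (ha : ∀ i, 0 < a i) (hx : 0 < ∑ i, a i * x i ^ 2) :
    (∑ i, x i * y i) ^ 2 / ∑ i, a i * x i ^ 2 ≤ ∑ i, y i ^ 2 / a i :=
  (div_le_iff₀ hx).2 (mul_comm (∑ i, a i * x i ^ 2) _ ▸ sq_sum_mul_le x y ha)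

lemma sq_sum_mul_div_eq_iff (ha : ∀ i, 0 < a i) (hy : y ≠ 0) (hx : 0 < ∑ i, a i * x i ^ 2) :
    (∑ i, x i * y i) ^ 2 / ∑ i, a i * x i ^ 2 = ∑ i, y i ^ 2 / a i ↔
      ∃ t : ℝ, x = fun i ↦ t * (y i / a i) := by
  rw [div_eq_iff hx.ne', mul_comm (∑ i, y i ^ 2 / a i)]
  exact sq_sum_mul_eq_iff x y ha hy

end WeightedCauchySchwarz

section RpowNorm

variable {ι : Type*} [Fintype ι] {p : ℝ}

lemma sum_abs_mul_rpow_rpow (hp : p ≠ 0) (t : ℝ) (v : ι → ℝ) :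
    (∑ i, |t * v i| ^ p) ^ (1 / p) = |t| * (∑ i, |v i| ^ p) ^ (1 / p) := by
  simp_rw [abs_mul, mul_rpow (abs_nonneg t) (abs_nonneg _), ← mul_sum]
  rw [mul_rpow (by positivity) (sum_nonneg fun i _ ↦ by positivity), ← rpow_mul (abs_nonneg t),
    mul_one_div_cancel hp, rpow_one]

lemma sum_abs_rpow_rpow_pos {v : ι → ℝ} (hv : v ≠ 0) : 0 < (∑ i, |v i| ^ p) ^ (1 / p) := by
  obtain ⟨j, hj⟩ := Function.ne_iff.1 hv
  exact rpow_pos_of_pos (sum_pos' (fun i _ ↦ by positivity)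
    ⟨j, mem_univ j, rpow_pos_of_pos (abs_pos.2 hj) p⟩) _

lemma ne_zero_of_sum_abs_rpow_rpow_eq_one (hp : p ≠ 0) {v : ι → ℝ}
    (hv : (∑ i, |v i| ^ p) ^ (1 / p) = 1) : v ≠ 0 := by
  rintro rfl
  simp [zero_rpow hp, inv_ne_zero hp] at hv

lemma sum_abs_rpow_rpow_inv_mul_self (hp : p ≠ 0) {v : ι → ℝ} (hv : v ≠ 0) :
    (∑ i, |((∑ i, |v i| ^ p) ^ (1 / p))⁻¹ * v i| ^ p) ^ (1 / p) = 1 := by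
  have hN := sum_abs_rpow_rpow_pos (p := p) hv
  rw [sum_abs_mul_rpow_rpow hp, abs_of_pos (inv_pos.2 hN), inv_mul_cancel₀ hN.ne']

lemma eq_inv_of_sum_abs_mul_rpow_rpow_eq_one (hp : p ≠ 0) {t : ℝ} (ht : 0 ≤ t) {v : ι → ℝ}
    (h : (∑ i, |t * v i| ^ p) ^ (1 / p) = 1) : t = ((∑ i, |v i| ^ p) ^ (1 / p))⁻¹ := by
  rw [sum_abs_mul_rpow_rpow hp, abs_of_nonneg ht] at h
  exact eq_inv_of_mul_eq_one_left h

end RpowNorm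

lemma gaussCDF_sqrt_two_mul {A B : ℝ} (hA : 0 ≤ A) (hB : 0 < B) :
    gaussCDF √(2 * B) A = gaussCDF 1 √(A ^ 2 / B / 2) := by
  rw [gaussCDF_eq_gaussCDF_one (sqrt_pos.2 (by positivity)), div_div, mul_comm B,
    sqrt_div' _ (by positivity), sqrt_sq hA]

lemma strictMonoOn_gaussCDF_sqrt_half : StrictMonoOn (fun r ↦ gaussCDF 1 √(r / 2)) (Set.Ici 0) :=
  fun _ hr _ _ hrs ↦ gaussCDF_strictMono one_ne_zero
    (sqrt_lt_sqrt (div_nonneg hr zero_le_two) (by linarith))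

/-- User utility `U(w) = F_{σ(w)}(wᵀφ)`, with `σ(w)² = 2wᵀSw`, attains its
maximum over `D = {w : w ≥ 0, ‖w‖ₚ = 1}` uniquely at `w* = S⁻¹φ/‖S⁻¹φ‖ₚ` (the same
user-optimal weight vector as without strategic adaptation). -/
theorem stmt_18 (k : ℕ) (hk : 1 ≤ k) (p : ℝ) (hp : 1 ≤ p)
    (φ S : Fin k → ℝ) (hφ : ∀ j, 0 < φ j) (hS : ∀ j, 0 < S j) :
    let pnorm : (Fin k → ℝ) → ℝ := fun w => (∑ j, |w j| ^ p) ^ (1 / p)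
    let D : Set (Fin k → ℝ) := {w | (∀ j, 0 ≤ w j) ∧ pnorm w = 1}
    let U : (Fin k → ℝ) → ℝ :=
      fun w => gaussCDF (Real.sqrt (2 * ∑ j, S j * w j ^ 2)) (∑ j, w j * φ j)
    let wstar : Fin k → ℝ := fun j => (φ j / S j) / pnorm (fun i => φ i / S i)
    wstar ∈ D ∧ (∀ w ∈ D, U w ≤ U wstar) ∧ (∀ w ∈ D, U w = U wstar → w = wstar) := by
  intro pnorm D U wstar
  have hp0 : p ≠ 0 := (zero_lt_one.trans_le hp).ne'
  set c : Fin k → ℝ := fun j ↦ φ j / S j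
  have hc : ∀ j, 0 < c j := fun j ↦ div_pos (hφ j) (hS j)
  have hc0 : c ≠ 0 := fun h ↦ (hc ⟨0, hk⟩).ne' (congrFun h _)
  have hφ0 : φ ≠ 0 := fun h ↦ (hφ ⟨0, hk⟩).ne' (congrFun h _)
  have hwstar : wstar = fun j ↦ (pnorm c)⁻¹ * c j := funext fun j ↦ div_eq_inv_mul _ _
  have hwD : wstar ∈ D := ⟨fun j ↦ div_nonneg (hc j).le (sum_abs_rpow_rpow_pos hc0).le,
    hwstar ▸ sum_abs_rpow_rpow_inv_mul_self hp0 hc0⟩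
  have hB : ∀ w ∈ D, 0 < ∑ j, S j * w j ^ 2 := fun w hw ↦
    sum_mul_sq_pos w hS (ne_zero_of_sum_abs_rpow_rpow_eq_one hp0 hw.2)
  have hU : ∀ w ∈ D, U w = gaussCDF 1 √((∑ j, w j * φ j) ^ 2 / (∑ j, S j * w j ^ 2) / 2) :=
    fun w hw ↦ gaussCDF_sqrt_two_mul (sum_nonneg fun j _ ↦ mul_nonneg (hw.1 j) (hφ j).le)
      (hB w hw)
  have hratio_nonneg : ∀ w ∈ D, 0 ≤ (∑ j, w j * φ j) ^ 2 / (∑ j, S j * w j ^ 2) :=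
    fun w hw ↦ div_nonneg (sq_nonneg _) (hB w hw).le
  have hratio_star := (sq_sum_mul_div_eq_iff wstar φ hS hφ0 (hB _ hwD)).2 ⟨_, hwstar⟩
  have hM : 0 ≤ ∑ j, φ j ^ 2 / S j := hratio_star ▸ hratio_nonneg wstar hwD
  refine ⟨hwD, fun w hw ↦ ?_, fun w hw hUw ↦ ?_⟩
  · rw [hU w hw, hU wstar hwD, hratio_star]
    exact strictMonoOn_gaussCDF_sqrt_half.monotoneOn (hratio_nonneg w hw) hM
      (sq_sum_mul_div_le w φ hS (hB w hw))
  · rw [hU w hw, hU wstar hwD, hratio_star] at hUw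
    obtain ⟨t, rfl⟩ := (sq_sum_mul_div_eq_iff w φ hS hφ0 (hB w hw)).1
      (strictMonoOn_gaussCDF_sqrt_half.injOn (hratio_nonneg w hw) hM hUw)
    have ht : 0 ≤ t := (mul_nonneg_iff_of_pos_right (hc ⟨0, hk⟩)).1 (hw.1 ⟨0, hk⟩)
    rw [hwstar, eq_inv_of_sum_abs_mul_rpow_rpow_eq_one hp0 ht hw.2]
end
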